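/- arXiv:1610.07945 — 2 statements merged into one kernel-verified Lean document; each statement's English description precedes it below -/
import Mathlib

section
/- Let k be a positive integer. Then (−1)^{k−1} B_{2k+1}(x) > 0 for all x with 0 < x < 1/2, and (−1)^{k−1} B_{2k+1}(x) < 0 for all x with 1/2 < x < 1, where B_n denotes the n-th Bernoulli polynomial. -/
/-!
Via the Fourier expansion `B_{2k+1}(x) = (-1)^{k+1} 2 (2k+1)! / (2π)^{2k+1} · ∑ sin(2πnx) / n^{2k+1}`,
it suffices to show `∑ sin(nθ) / n^m > 0` for `0 < θ < π` and `m ≥ 3`. Since `|sin(nθ)| ≤ n sin θ`,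
each term with `n ≥ 2` is at least `-sin θ / n²`, so the sum is at least
`sin θ (2 - ζ(2)) = sin θ (2 - π²/6) > 0`. The range `1/2 < x < 1` follows from `B_n(1-x) = (-1)^n B_n(x)`.
-/

open HurwitzZeta Polynomial Set

noncomputable def bernoulliPoly (n : ℕ) (x : ℝ) : ℝ := Polynomial.aeval x (Polynomial.bernoulli n)

open Real

theorem abs_sin_nat_mul_le {θ : ℝ} (h0 : 0 ≤ θ) (hπ : θ ≤ π) (n : ℕ) :
    |sin (n * θ)| ≤ n * sin θ := by
  induction n with
  | zero => simp
  | succ n ih =>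
    have hsin : 0 ≤ sin θ := sin_nonneg_of_nonneg_of_le_pi h0 hπ
    calc |sin ((n + 1 : ℕ) * θ)| = |sin (n * θ) * cos θ + cos (n * θ) * sin θ| := by
          push_cast; rw [add_mul, one_mul, sin_add]
      _ ≤ |sin (n * θ)| * |cos θ| + |cos (n * θ)| * sin θ := by
          rw [← abs_mul, ← abs_of_nonneg hsin, ← abs_mul, abs_of_nonneg hsin]
          exact abs_add_le _ _
      _ ≤ |sin (n * θ)| * 1 + 1 * sin θ := by
          gcongr
          · exact abs_cos_le_one θ
          · exact abs_cos_le_one _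
      _ ≤ (n + 1 : ℕ) * sin θ := by push_cast; linarith

theorem sin_nat_mul_div_pow_add_nonneg {θ : ℝ} (h0 : 0 ≤ θ) (hπ : θ ≤ π) {m : ℕ} (hm : 3 ≤ m)
    (n : ℕ) : 0 ≤ sin (n * θ) / n ^ m + sin θ / n ^ 2 := by
  rcases Nat.eq_zero_or_pos n with rfl | hn
  · simp
  have hn1 : (1 : ℝ) ≤ n := by exact_mod_cast hn
  have hbound : |sin (n * θ) / n ^ m| ≤ sin θ / n ^ 2 :=
    calc |sin (n * θ) / n ^ m| = |sin (n * θ)| / n ^ m := by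
          rw [abs_div, abs_of_pos (by positivity : (0 : ℝ) < n ^ m)]
      _ ≤ n * sin θ / n ^ 3 := by
          gcongr
          · exact mul_nonneg n.cast_nonneg (sin_nonneg_of_nonneg_of_le_pi h0 hπ)
          · exact abs_sin_nat_mul_le h0 hπ n
      _ = sin θ / n ^ 2 := by field_simp
  linarith [neg_abs_le (sin (n * θ) / n ^ m)]

theorem pos_of_hasSum_sin_nat_mul_div_pow {θ S : ℝ} (h0 : 0 < θ) (hπ : θ < π) {m : ℕ}
    (hm : 3 ≤ m) (hS : HasSum (fun n : ℕ => sin (n * θ) / n ^ m) S) : 0 < S := by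
  have hsin : 0 < sin θ := sin_pos_of_pos_of_lt_pi h0 hπ
  have hshifted : HasSum (fun n : ℕ => sin (n * θ) / n ^ m + sin θ / n ^ 2)
      (S + sin θ * (π ^ 2 / 6)) := by
    simpa only [mul_one_div] using hS.add (hasSum_zeta_two.mul_left (sin θ))
  have hfirst := le_hasSum hshifted 1 fun n _ ↦ sin_nat_mul_div_pow_add_nonneg h0.le hπ.le hm n
  have hπsq : π ^ 2 < 12 := by nlinarith [pi_lt_d2, pi_pos]
  simp only [Nat.cast_one, one_mul, one_pow, div_one] at hfirst
  nlinarith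

theorem bernoulliPoly_eq_bernoulliFun : bernoulliPoly = bernoulliFun := by
  ext n x
  rw [bernoulliPoly, bernoulliFun, aeval_def, eval_map]

theorem bernoulliFun_odd_sign_of_lt_half {k : ℕ} (hk : k ≠ 0) {x : ℝ} (hx0 : 0 < x)
    (hx : x < 1 / 2) : 0 < (-1) ^ (k + 1) * bernoulliFun (2 * k + 1) x := by
  have hc : 0 < (2 * π) ^ (2 * k + 1) / 2 / (2 * k + 1).factorial := by
    have := pi_pos
    positivity
  have hfourier : HasSum (fun n : ℕ => sin (n * (2 * π * x)) / n ^ (2 * k + 1))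
      ((2 * π) ^ (2 * k + 1) / 2 / (2 * k + 1).factorial *
        ((-1) ^ (k + 1) * bernoulliFun (2 * k + 1) x)) := by
    convert hasSum_one_div_nat_pow_mul_sin hk (x := x) ⟨hx0.le, by linarith⟩ using 1
    · ext n
      ring_nf
    · rw [bernoulliFun]
      ring
  exact pos_of_mul_pos_right (pos_of_hasSum_sin_nat_mul_div_pow (by nlinarith [pi_pos])
    (by nlinarith [pi_pos]) (by omega) hfourier) hc.le

/-- For a positive integer `k`: `(-1)^(k-1) B_{2k+1}(x) > 0` for `0 < x < 1/2`, and
`(-1)^(k-1) B_{2k+1}(x) < 0` for `1/2 < x < 1`. -/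
theorem bernoulli_odd_sign (k : ℕ) (hk : 0 < k) :
    (∀ x : ℝ, 0 < x → x < 1 / 2 → 0 < (-1 : ℝ) ^ (k - 1) * bernoulliPoly (2 * k + 1) x) ∧
      (∀ x : ℝ, 1 / 2 < x → x < 1 → (-1 : ℝ) ^ (k - 1) * bernoulliPoly (2 * k + 1) x < 0) := by
  have hsign : (-1 : ℝ) ^ (k - 1) = (-1) ^ (k + 1) := by
    rw [show k + 1 = k - 1 + 2 by omega, pow_add]; norm_num
  rw [hsign, bernoulliPoly_eq_bernoulliFun]
  refine ⟨fun x hx0 hx ↦ bernoulliFun_odd_sign_of_lt_half hk.ne' hx0 hx, fun x hx hx1 ↦ ?_⟩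
  have hreflect : bernoulliFun (2 * k + 1) x = -bernoulliFun (2 * k + 1) (1 - x) := by
    rw [bernoulliFun_eval_one_sub, pow_succ, pow_mul]; norm_num
  have := bernoulliFun_odd_sign_of_lt_half hk.ne' (x := 1 - x) (by linarith) (by linarith)
  rw [hreflect]
  linarith
end

section
/- Let N ≥ 4 be an integer and 0 < a ≤ 1 with B_{N+1}(a)·B_{N+2}(a) < 0, where B_n denotes the n-th Bernoulli polynomial. Then the Hurwitz zeta function σ ↦ ζ(σ, a) has exactly one real zero in the open interval (−N−1, −N). -/
open HurwitzZeta Polynomial Set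

/-!
Write `F(t) = expZeta a t = ∑ e^{2πian} n^{-t}`. For `t > 1` the functional equation together
with `expZeta (-a) t = conj F(t)` gives `ζ(1 - t, a) = 2 (2π)^{-t} Γ(t) Re (e^{-iπt/2} F(t))`.
Hence `ζ(σ, a)` is real for `σ < 0`, and since `ζ(-k, a) = -B_{k+1}(a)/(k+1)`, the sign
condition and the intermediate value theorem produce a zero in `(-N-1, -N)`.

A zero `σ = 1 - t` means that `F(t)` lies on the line `e^{iπt/2} iℝ`, which turns at speed `π/2`.
For `t ≥ 5` the Dirichlet series is dominated by its first term: `‖F(t)‖ > 3/4` and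
`‖F'(t)‖ < 1/4`. Two zeros at distance `d < 1` would put `F(t₁)` and `F(t₂)` at least
`‖F(t₁)‖ sin (πd/2) > 3d/4` apart, whereas the mean value theorem places them at most `d/4` apart.
-/

open Complex LSeries
open scoped Real ComplexConjugate

lemma norm_LSeries_sub_apply_one_le {f : ℕ → ℂ} (hf : ∀ n ≠ 0, ‖f n‖ ≤ n) {s : ℂ}
    (hs : 5 ≤ s.re) : ‖LSeries f s - f 1‖ ≤ π ^ 4 / 90 - 1 := by
  have hterm (n : ℕ) : ‖term f s n‖ ≤ 1 / (n : ℝ) ^ 4 := by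
    rcases eq_or_ne n 0 with rfl | hn
    · simp
    refine (norm_term_le_of_re_le_re f (s := 5) (by simpa using hs) n).trans ?_
    rw [norm_term_eq, if_neg hn, div_le_div_iff₀ (by positivity) (by positivity)]
    calc ‖f n‖ * (n : ℝ) ^ 4 ≤ n * n ^ 4 := by gcongr; exact hf n hn
      _ = 1 * (n : ℝ) ^ (5 : ℂ).re := by norm_num; ring
  have hsum : Summable (term f s) := .of_norm_bounded hasSum_zeta_four.summable hterm
  have htail : HasSum (fun n ↦ 1 / ((n + 2 : ℕ) : ℝ) ^ 4) (π ^ 4 / 90 - 1) := by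
    simpa [Finset.sum_range_succ] using (hasSum_nat_add_iff' 2).mpr hasSum_zeta_four
  have hsplit : LSeries f s - f 1 = ∑' n, term f s (n + 2) := by
    rw [LSeries, ← hsum.sum_add_tsum_nat_add 2]
    simp [Finset.sum_range_succ]
  rw [hsplit]
  exact tsum_of_norm_bounded htail fun n ↦ hterm (n + 2)

lemma pi_pow_four_div_ninety_sub_one_lt : π ^ 4 / 90 - 1 < 1 / 4 := by
  nlinarith [pow_lt_pow_left₀ Real.pi_lt_d2 Real.pi_pos.le (by norm_num : (4 : ℕ) ≠ 0)]

lemma norm_exp_two_pi_I_mul (a : ℝ) (n : ℕ) : ‖cexp (2 * π * I * a * n)‖ = 1 := by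
  simp [Complex.norm_exp]

lemma norm_exp_neg_ofReal_mul_I (x : ℝ) : ‖cexp (-(x * I))‖ = 1 := by
  rw [← neg_mul, ← ofReal_neg, norm_exp_ofReal_mul_I]

section ExpZetaOfReal

variable (a : ℝ) {t : ℝ}

lemma hasDerivAt_expZeta_ofReal (ht : 1 < t) :
    HasDerivAt (fun u : ℝ ↦ expZeta a u) (-LSeries (logMul (cexp <| 2 * π * I * a * ·)) t) t := by
  have habs : abscissaOfAbsConv (cexp <| 2 * π * I * a * ·) < (t : ℂ).re :=
    (abscissaOfAbsConv_le_of_le_const ⟨1, fun n _ ↦ (norm_exp_two_pi_I_mul a n).le⟩).trans_lt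
      (by exact_mod_cast ht)
  have hev : LSeries (cexp <| 2 * π * I * a * ·) =ᶠ[nhds (t : ℂ)] expZeta a := by
    filter_upwards [(isOpen_lt continuous_const continuous_re).mem_nhds
      (by simpa using ht : 1 < (t : ℂ).re)] with s hs using (LSeriesHasSum_exp a hs).LSeries_eq
  exact ((LSeries_hasDerivAt habs).congr_of_eventuallyEq hev.symm).comp_ofReal

lemma three_quarters_lt_norm_expZeta (ht : 5 ≤ t) : 3 / 4 < ‖expZeta a t‖ := by
  have hclose : ‖expZeta a t - cexp (2 * π * I * a)‖ ≤ π ^ 4 / 90 - 1 := by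
    simpa [(LSeriesHasSum_exp a (by rw [ofReal_re]; linarith)).LSeries_eq] using
      norm_LSeries_sub_apply_one_le (f := (cexp <| 2 * π * I * a * ·)) (s := t)
        (fun n hn ↦ by rw [norm_exp_two_pi_I_mul]; exact_mod_cast Nat.one_le_iff_ne_zero.mpr hn)
        (by simpa using ht)
  have hone : ‖cexp (2 * π * I * a)‖ = 1 := by simpa using norm_exp_two_pi_I_mul a 1
  linarith [norm_sub_norm_le (cexp (2 * π * I * a)) (expZeta a t),
    norm_sub_rev (cexp (2 * π * I * a)) (expZeta a t), pi_pow_four_div_ninety_sub_one_lt]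

lemma norm_LSeries_logMul_exp_lt (ht : 5 ≤ t) :
    ‖LSeries (logMul (cexp <| 2 * π * I * a * ·)) t‖ < 1 / 4 := by
  have hle (n : ℕ) (_ : n ≠ 0) : ‖logMul (cexp <| 2 * π * I * a * ·) n‖ ≤ n := by
    rw [logMul, norm_mul, norm_exp_two_pi_I_mul, mul_one, ← ofReal_natCast,
      ← ofReal_log n.cast_nonneg, norm_real, Real.norm_eq_abs,
      abs_of_nonneg (Real.log_natCast_nonneg n)]
    exact (Real.log_le_sub_one_of_pos (by positivity)).trans (by linarith)
  have := norm_LSeries_sub_apply_one_le hle (s := t) (by simpa using ht)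
  simp only [logMul, Nat.cast_one, log_one, zero_mul, sub_zero] at this
  linarith [pi_pow_four_div_ninety_sub_one_lt]

lemma expZeta_neg_ofReal (ht : 1 < t) : expZeta (-a : ℝ) t = conj (expZeta a t) := by
  have ht' : 1 < (t : ℂ).re := by simpa using ht
  refine (hasSum_expZeta_of_one_lt_re (-a) ht').unique (Complex.hasSum_conj'.mpr
    (hasSum_expZeta_of_one_lt_re a ht') |>.congr_fun fun n ↦ ?_)
  rw [map_div₀, ← exp_conj, ← ofReal_natCast, ← ofReal_cpow n.cast_nonneg, conj_ofReal]
  simp [map_ofNat]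

end ExpZetaOfReal

lemma norm_mul_abs_sin_sub_le_norm_sub {z w : ℂ} {θ φ : ℝ} (hz : (cexp (-(θ * I)) * z).re = 0)
    (hw : (cexp (-(φ * I)) * w).re = 0) : ‖z‖ * |Real.sin (θ - φ)| ≤ ‖z - w‖ := by
  set y := (cexp (-(θ * I)) * z).im
  have hy : cexp (-(θ * I)) * z = y * I := by
    rw [← Complex.re_add_im (cexp (-(θ * I)) * z), hz, ofReal_zero, zero_add]
  have hnorm : ‖z‖ = |y| := by
    rw [← one_mul ‖z‖, ← norm_exp_neg_ofReal_mul_I θ, ← norm_mul, hy, norm_mul, norm_I, mul_one,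
      norm_real, Real.norm_eq_abs]
  have hrot : cexp (-(φ * I)) * z = cexp ((θ - φ : ℝ) * I) * (y * I) := by
    rw [← hy, ← mul_assoc, ← Complex.exp_add]; push_cast; ring_nf
  calc ‖z‖ * |Real.sin (θ - φ)| = |(cexp (-(φ * I)) * z).re| := by
        rw [hrot, hnorm, ← abs_mul, mul_re, exp_ofReal_mul_I_re, exp_ofReal_mul_I_im]
        simp [mul_comm]
    _ = |(cexp (-(φ * I)) * (z - w)).re| := by rw [mul_sub, sub_re, hw, sub_zero]
    _ ≤ ‖z - w‖ := by
        simpa [norm_exp_neg_ofReal_mul_I] using abs_re_le_norm (cexp (-(φ * I)) * (z - w))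

lemma one_le_sub_of_re_cexp_mul_eq_zero {F F' : ℝ → ℂ} {M t₁ t₂ : ℝ}
    (hF : ∀ t ∈ Icc t₁ t₂, HasDerivWithinAt F (F' t) (Icc t₁ t₂) t)
    (hF' : ∀ t ∈ Icc t₁ t₂, ‖F' t‖ ≤ M) (hM : M < ‖F t₁‖) (h₁₂ : t₁ < t₂)
    (h₁ : (cexp (-((π * t₁ / 2 : ℝ) * I)) * F t₁).re = 0)
    (h₂ : (cexp (-((π * t₂ / 2 : ℝ) * I)) * F t₂).re = 0) : 1 ≤ t₂ - t₁ := by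
  by_contra! hd
  have hmvt : ‖F t₂ - F t₁‖ ≤ M * (t₂ - t₁) := by
    simpa [abs_of_pos (sub_pos.mpr h₁₂)] using
      (convex_Icc t₁ t₂).norm_image_sub_le_of_norm_hasDerivWithin_le hF hF'
        (left_mem_Icc.mpr h₁₂.le) (right_mem_Icc.mpr h₁₂.le)
  have hjordan : t₂ - t₁ ≤ |Real.sin (π * t₁ / 2 - π * t₂ / 2)| := by
    have h := Real.mul_le_sin (x := π * (t₂ - t₁) / 2) (by nlinarith [Real.pi_pos])
      (by nlinarith [Real.pi_pos])
    rw [show π * t₁ / 2 - π * t₂ / 2 = -(π * (t₂ - t₁) / 2) by ring, Real.sin_neg, abs_neg]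
    field_simp at h
    exact h.trans (le_abs_self _)
  have hgeo := norm_mul_abs_sin_sub_le_norm_sub h₁ h₂
  rw [norm_sub_rev] at hgeo
  nlinarith [mul_le_mul_of_nonneg_left hjordan (norm_nonneg (F t₁))]

section HurwitzZetaOfReal

variable (a : ℝ)

lemma hurwitzZeta_one_sub_ofReal {t : ℝ} (ht : 1 < t) :
    hurwitzZeta a (1 - t) = ((2 * π) ^ (-t) * Real.Gamma t *
      (2 * (cexp (-((π * t / 2 : ℝ) * I)) * expZeta a t).re) : ℝ) := by
  have hs (n : ℕ) : (t : ℂ) ≠ -n := by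
    rw [← ofReal_natCast, ← ofReal_neg, ne_eq, ofReal_inj]
    linarith [(n.cast_nonneg : (0 : ℝ) ≤ n)]
  have hrot : cexp (-π * I * t / 2) = cexp (-((π * t / 2 : ℝ) * I)) := by push_cast; ring_nf
  have hrot' : cexp (π * I * t / 2) = conj (cexp (-((π * t / 2 : ℝ) * I))) := by
    rw [← exp_conj]; simp [map_ofNat]; ring_nf
  rw [hurwitzZeta_one_sub a hs (.inr (by exact_mod_cast ht.ne')), ← AddCircle.coe_neg,
    expZeta_neg_ofReal a ht, hrot, hrot', ← map_mul, add_conj, Gamma_ofReal,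
    ← ofReal_ofNat, ← ofReal_mul, ← ofReal_neg, ← ofReal_cpow (by positivity)]
  push_cast
  ring

lemma hurwitzZeta_ofReal_im_eq_zero {σ : ℝ} (hσ : σ < 0) : (hurwitzZeta a σ).im = 0 := by
  have h := hurwitzZeta_one_sub_ofReal a (t := 1 - σ) (by linarith)
  rw [ofReal_sub, ofReal_one, sub_sub_cancel] at h
  rw [h, ofReal_im]

lemma hurwitzZeta_neg_natCast (ha : a ∈ Icc 0 1) {k : ℕ} (hk : k ≠ 0) :
    hurwitzZeta a (-k) = (-bernoulliPoly (k + 1) a / (k + 1) : ℝ) := by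
  rw [hurwitzZeta_neg_nat hk ha, eval_map, ← aeval_def, bernoulliPoly,
    ← Complex.coe_algebraMap, aeval_algebraMap_apply]
  push_cast
  ring

lemma re_cexp_mul_expZeta_eq_zero_of_hurwitzZeta_eq_zero {t : ℝ} (ht : 1 < t)
    (h : hurwitzZeta a (1 - t) = 0) : (cexp (-((π * t / 2 : ℝ) * I)) * expZeta a t).re = 0 := by
  rw [hurwitzZeta_one_sub_ofReal a ht, ofReal_eq_zero] at h
  have : 0 < (2 * π) ^ (-t) * Real.Gamma t := by
    have := Real.Gamma_pos_of_pos (by linarith : 0 < t)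
    positivity
  simpa [this.ne'] using h

lemma one_le_sub_of_hurwitzZeta_eq_zero {σ₁ σ₂ : ℝ} (hσ₂ : σ₂ ≤ -4) (h₁₂ : σ₁ < σ₂)
    (h₁ : hurwitzZeta a σ₁ = 0) (h₂ : hurwitzZeta a σ₂ = 0) : 1 ≤ σ₂ - σ₁ := by
  have hzero (σ : ℝ) (hσ : σ ≤ -4) (h : hurwitzZeta a σ = 0) :
      (cexp (-((π * (1 - σ) / 2 : ℝ) * I)) * expZeta a ↑(1 - σ)).re = 0 :=
    re_cexp_mul_expZeta_eq_zero_of_hurwitzZeta_eq_zero a (by linarith) (by simpa using h)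
  have := one_le_sub_of_re_cexp_mul_eq_zero (t₁ := 1 - σ₂) (t₂ := 1 - σ₁) (M := 1 / 4)
    (fun t ht ↦ (hasDerivAt_expZeta_ofReal a (by linarith [ht.1])).hasDerivWithinAt)
    (fun t ht ↦ by rw [norm_neg]; exact (norm_LSeries_logMul_exp_lt a (by linarith [ht.1])).le)
    ((three_quarters_lt_norm_expZeta a (by linarith)).trans' (by norm_num)) (by linarith)
    (hzero σ₂ hσ₂ h₂) (hzero σ₁ (by linarith) h₁)
  linarith

end HurwitzZetaOfReal

lemma exists_mem_Ioo_eq_zero_of_mul_neg {f : ℝ → ℝ} {a b : ℝ} (hab : a ≤ b)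
    (hf : ContinuousOn f (Icc a b)) (h : f a * f b < 0) : ∃ c ∈ Ioo a b, f c = 0 := by
  rcases mul_neg_iff.mp h with ⟨ha, hb⟩ | ⟨ha, hb⟩
  · exact intermediate_value_Ioo' hab hf ⟨hb, ha⟩
  · exact intermediate_value_Ioo hab hf ⟨ha, hb⟩

/-- For an integer `N ≥ 4` and `0 < a ≤ 1` with `B_{N+1}(a)·B_{N+2}(a) < 0`, the Hurwitz
zeta function `σ ↦ ζ(σ, a)` has exactly one real zero in the open interval `(-N-1, -N)`. -/
theorem hurwitzZeta_exactly_one_zero_of_four_le (N : ℕ) (hN : 4 ≤ N) (a : ℝ) (ha : 0 < a)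
    (ha' : a ≤ 1) (hB : bernoulliPoly (N + 1) a * bernoulliPoly (N + 2) a < 0) :
    ∃! σ : ℝ, σ ∈ Set.Ioo (-(N : ℝ) - 1) (-(N : ℝ)) ∧
      hurwitzZeta (a : UnitAddCircle) (σ : ℂ) = 0 := by
  have hN' : (4 : ℝ) ≤ N := by exact_mod_cast hN
  set Z : ℝ → ℝ := fun σ ↦ (hurwitzZeta a σ).re
  have hcont : ContinuousOn Z (Icc (-(N : ℝ) - 1) (-N)) := fun σ hσ ↦
    (continuous_re.continuousAt.comp ((differentiableAt_hurwitzZeta a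
      (by rw [Ne, ← ofReal_one, ofReal_inj]; linarith [hσ.2])).continuousAt.comp
      continuous_ofReal.continuousAt)).continuousWithinAt
  have hend (k : ℕ) (hk : k ≠ 0) : Z (-k) = -bernoulliPoly (k + 1) a / (k + 1) := by
    simp only [Z, ofReal_neg, ofReal_natCast]
    rw [hurwitzZeta_neg_natCast a ⟨ha.le, ha'⟩ hk, ofReal_re]
  have hsign : Z (-(N : ℝ) - 1) * Z (-N) < 0 := by
    have h₁ := hend (N + 1) (by omega)
    have h₂ := hend N (by omega)
    push_cast at h₁ h₂
    rw [show -(N : ℝ) - 1 = -(N + 1) by ring, h₁, h₂, div_mul_div_comm, neg_mul_neg, mul_comm]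
    exact div_neg_of_neg_of_pos (by rwa [show N + 1 + 1 = N + 2 by ring]) (by positivity)
  obtain ⟨σ, hσ, hZσ⟩ := exists_mem_Ioo_eq_zero_of_mul_neg (by linarith) hcont hsign
  have hζσ : hurwitzZeta a σ = 0 :=
    Complex.ext hZσ (hurwitzZeta_ofReal_im_eq_zero a (by linarith [hσ.2]))
  refine ⟨σ, ⟨hσ, hζσ⟩, fun τ ⟨hτ, hζτ⟩ ↦ le_antisymm ?_ ?_⟩
  · refine le_of_not_gt fun h ↦ ?_
    linarith [one_le_sub_of_hurwitzZeta_eq_zero a (by linarith [hτ.2]) h hζσ hζτ, hσ.1, hτ.2]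
  · refine le_of_not_gt fun h ↦ ?_
    linarith [one_le_sub_of_hurwitzZeta_eq_zero a (by linarith [hσ.2]) h hζτ hζσ, hσ.2, hτ.1]
end
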